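/- arXiv:1703.06524 — 4 statements merged into one kernel-verified Lean document; each statement's English description precedes it below -/
import Mathlib

section
/- Let Π > 1 be an integer. Then the sum over the prime divisors p of Π of (log p)/p satisfies Σ_{p | Π} (log p)/p ≤ log log Π + 2. -/
/-!
Split the prime divisors of `n` at `y = log n`. Those above `y` contribute at most
`(∑_{p ∣ n} log p) / y ≤ log n / y = 1`. Those below `y` contribute at most Mertens' sum
`∑_{p ≤ y} log p / p ≤ log y + 1`, which follows from Legendre's formula
`∑_{p ≤ m} ⌊m/p⌋ log p ≤ log m!`, Chebyshev's bound `θ(m) ≤ m log 4` and Stirling's upper bound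
`log m! ≤ m log m - m + (log m) / 2 + 1`.
-/

open Finset Real
open scoped Nat
open Nat (primesLE primesLE_zero mem_primesLE prime_of_mem_primesLE)

namespace Nat

theorem div_le_factorization_factorial {m p : ℕ} (hp : p.Prime) :
    m / p ≤ (m !).factorization p := by
  rw [factorization_factorial hp (show log p m < log p m + 2 by omega)]
  simpa using single_le_sum (f := fun i => m / p ^ i) (fun _ _ => Nat.zero_le _)
    (show 1 ∈ Ico 1 (log p m + 2) by simp)

theorem primeFactors_factorial (m : ℕ) : (m !).primeFactors = primesLE m := by
  ext p
  simp only [mem_primeFactors, mem_primesLE, ne_eq, factorial_ne_zero, not_false_eq_true,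
    and_true]
  exact ⟨fun ⟨hp, hd⟩ => ⟨hp.dvd_factorial.1 hd, hp⟩,
    fun ⟨hpm, hp⟩ => ⟨hp, hp.dvd_factorial.2 hpm⟩⟩

end Nat

namespace Stirling

theorem log_factorial_le_stirling {n : ℕ} (hn : n ≠ 0) :
    log n ! ≤ n * log n - n + log n / 2 + 1 := by
  have hseq : log (stirlingSeq n) ≤ log (stirlingSeq 1) := by
    obtain ⟨k, rfl⟩ := Nat.exists_eq_succ_of_ne_zero hn
    exact log_le_log (stirlingSeq'_pos k) (stirlingSeq'_antitone (Nat.zero_le k))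
  rw [log_stirlingSeq_formula, stirlingSeq_one, log_div (exp_pos 1).ne' (by positivity),
    log_exp, log_sqrt zero_le_two, log_mul two_ne_zero (by positivity),
    log_div (by positivity) (exp_pos 1).ne', log_exp] at hseq
  linarith

end Stirling

theorem sum_primeFactors_log_le_log (n : ℕ) : ∑ p ∈ n.primeFactors, log p ≤ log n := by
  rcases eq_or_ne n 0 with rfl | hn
  · simp
  rw [← log_prod fun p hp => by exact_mod_cast (Nat.prime_of_mem_primeFactors hp).ne_zero]
  have hprod := Nat.le_of_dvd (by omega) (Nat.prod_primeFactors_dvd n)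
  exact log_le_log (prod_pos fun p hp => by exact_mod_cast (Nat.prime_of_mem_primeFactors hp).pos)
    (by rw [← Nat.cast_prod]; exact_mod_cast hprod)

theorem sum_primesLE_div_mul_log_le_log_factorial (m : ℕ) :
    ∑ p ∈ primesLE m, ((m / p : ℕ) : ℝ) * log p ≤ log m ! := by
  rw [log_nat_eq_sum_factorization, Finsupp.sum, Nat.support_factorization,
    Nat.primeFactors_factorial]
  gcongr with p hp
  exact_mod_cast Nat.div_le_factorization_factorial (prime_of_mem_primesLE hp)

theorem mul_sum_primesLE_log_div_le (m : ℕ) :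
    m * ∑ p ∈ primesLE m, log p / p ≤ log m ! + log 4 * m := by
  calc (m : ℝ) * ∑ p ∈ primesLE m, log p / p
      = ∑ p ∈ primesLE m, (m / p : ℝ) * log p := by
        rw [mul_sum]; exact sum_congr rfl fun p _ => by ring
    _ ≤ ∑ p ∈ primesLE m, (((m / p : ℕ) : ℝ) * log p + log p) := by
        gcongr with p
        rw [← add_one_mul, ← Nat.floor_div_eq_div (K := ℝ)]
        exact mul_le_mul_of_nonneg_right (Nat.lt_floor_add_one _).le (log_natCast_nonneg p)
    _ = ∑ p ∈ primesLE m, ((m / p : ℕ) : ℝ) * log p + Chebyshev.theta m := by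
        rw [sum_add_distrib, Chebyshev.theta_eq_sum_primesLE_log]
    _ ≤ log m ! + log 4 * m :=
        add_le_add (sum_primesLE_div_mul_log_le_log_factorial m)
          (Chebyshev.theta_le_log4_mul_x m.cast_nonneg)

theorem sum_primesLE_log_div_le {m : ℕ} (hm : m ≠ 0) :
    ∑ p ∈ primesLE m, log p / p ≤ log m + 1 := by
  rcases (show m = 1 ∨ m = 2 ∨ 3 ≤ m by omega) with rfl | rfl | hm3
  · simp
  · have h2 : primesLE 2 = {2} := by decide
    simp only [h2, sum_singleton, Nat.cast_ofNat]
    linarith [log_nonneg one_le_two]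
  have hm0 : (0 : ℝ) < m := by positivity
  have hm3' : (3 : ℝ) ≤ m := by exact_mod_cast hm3
  have hlog_le : exp 1 * log m ≤ m := by
    simpa [exp_log hm0] using exp_one_mul_le_exp (x := log m)
  have hlog4 : log 4 < 1.39 := by
    rw [show (4 : ℝ) = 2 ^ 2 by norm_num, log_pow]
    push_cast
    linarith [log_two_lt_d9]
  -- `log m ≤ m / e` keeps the Stirling error term `(log m) / 2 + 1` below `(2 - log 4) m`
  have herror : log m / 2 + 1 ≤ (2 - log 4) * m := by
    nlinarith [exp_one_gt_d9, log_nonneg (by linarith : (1 : ℝ) ≤ m)]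
  refine le_of_mul_le_mul_left ?_ hm0
  linarith [mul_sum_primesLE_log_div_le m, Stirling.log_factorial_le_stirling hm]

theorem sum_primesLE_floor_log_div_le {x : ℝ} (hx : exp (-1) ≤ x) :
    ∑ p ∈ primesLE ⌊x⌋₊, log p / p ≤ log x + 1 := by
  have hx0 : 0 < x := (exp_pos _).trans_le hx
  rcases eq_or_ne ⌊x⌋₊ 0 with h | h
  · rw [h, primesLE_zero, sum_empty]
    linarith [(le_log_iff_exp_le hx0).2 hx]
  calc ∑ p ∈ primesLE ⌊x⌋₊, log p / p ≤ log ⌊x⌋₊ + 1 := sum_primesLE_log_div_le h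
    _ ≤ log x + 1 := by
        gcongr
        exact Nat.floor_le hx0.le

theorem sum_primeFactors_filter_le_log_div_le (n : ℕ) {y : ℝ} (hy : exp (-1) ≤ y) :
    ∑ p ∈ n.primeFactors with (p : ℕ) ≤ y, log p / p ≤ log y + 1 := by
  refine le_trans (sum_le_sum_of_subset_of_nonneg ?_ fun p _ _ => by positivity)
    (sum_primesLE_floor_log_div_le hy)
  intro p hp
  obtain ⟨hpn, hpy⟩ := mem_filter.1 hp
  exact mem_primesLE.2 ⟨Nat.le_floor hpy, Nat.prime_of_mem_primeFactors hpn⟩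

theorem sum_primeFactors_filter_gt_log_div_le (n : ℕ) {y : ℝ} (hy : 0 < y) :
    ∑ p ∈ n.primeFactors with y < (p : ℕ), log p / p ≤ log n / y := by
  calc ∑ p ∈ n.primeFactors with y < (p : ℕ), log p / p
      ≤ ∑ p ∈ n.primeFactors with y < (p : ℕ), log p / y :=
        sum_le_sum fun p hp =>
          div_le_div_of_nonneg_left (log_natCast_nonneg p) hy (mem_filter.1 hp).2.le
    _ = (∑ p ∈ n.primeFactors with y < (p : ℕ), log p) / y := (sum_div _ _ _).symm
    _ ≤ log n / y := by
        gcongr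
        exact (sum_le_sum_of_subset_of_nonneg (filter_subset _ _)
          fun p _ _ => log_natCast_nonneg p).trans (sum_primeFactors_log_le_log n)

theorem exp_neg_one_lt_log_two : exp (-1) < log 2 := by
  have h : exp (-1) < 2⁻¹ := by
    rw [exp_neg]
    exact inv_strictAnti₀ two_pos (by linarith [exp_one_gt_d9])
  linarith [log_two_gt_d9]

/-- For every integer `Π > 1`,
`∑_{p | Π} (log p)/p ≤ log log Π + 2`, the sum being over the prime divisors of `Π`. -/
theorem statement3 (n : ℕ) (hn : 1 < n) :
    ∑ p ∈ n.primeFactors, Real.log p / p ≤ Real.log (Real.log n) + 2 := by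
  have hlog : exp (-1) < log n :=
    exp_neg_one_lt_log_two.trans_le (log_le_log two_pos (by exact_mod_cast hn))
  rw [← sum_filter_add_sum_filter_not n.primeFactors fun p : ℕ => (p : ℝ) ≤ log n]
  simp only [not_le]
  calc _ ≤ (log (log n) + 1) + log n / log n :=
        add_le_add (sum_primeFactors_filter_le_log_div_le n hlog.le)
          (sum_primeFactors_filter_gt_log_div_le n ((exp_pos _).trans hlog))
    _ = log (log n) + 2 := by
        rw [div_self ((exp_pos _).trans hlog).ne']
        ring
end

section
/- Let a = (a₀,a₁,a₂,a₃) and b = (b₀,b₁,b₂,b₃) be quadruples of integers such that a_i b_j − a_j b_i ≠ 0 for some indices i, j. Then there exist quadruples of integers c = (c₀,c₁,c₂,c₃) and d = (d₀,d₁,d₂,d₃) such that gcd over all pairs i ≠ j of (c_i d_j − c_j d_i) equals 1, and such that c and d span the same 2-dimensional ℚ-vector subspace of ℚ⁴ as a and b. -/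
/-!
If a prime `p` divides every minor `a i * b j - a j * b i`, the pair `(a, b)` can be replaced by
one with the same `ℚ`-span whose minors are those of `(a, b)` divided by `p`: if `p` divides every
`b i`, replace `b` by `b / p`; otherwise `p ∤ b k` for some `k`, and for `y ≡ -a k / b k (mod p)`
the vanishing of the minors modulo `p` makes `a + y b` divisible by `p`, so replace `a` by
`(a + y b) / p`. Since the minors do not all vanish, their gcd drops strictly at each step, and the
process ends at a pair whose minors are coprime.
-/

open Finset Submodule

lemma span_pair_eq_of_smul_eq_add {K V : Type*} [Field K] [AddCommGroup V] [Module K V]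
    {x y z : V} {p t : K} (hp : p ≠ 0) (h : p • z = x + t • y) :
    span K {z, y} = span K {x, y} := by
  have hz : z = p⁻¹ • x + (p⁻¹ * t) • y := by
    rw [mul_smul, ← smul_add, ← h, inv_smul_smul₀ hp]
  have hx : x = p • z + (-t) • y := by
    rw [h, neg_smul, add_neg_cancel_right]
  apply le_antisymm <;> rw [span_le, Set.insert_subset_iff, Set.singleton_subset_iff] <;>
    refine ⟨?_, subset_span (by simp)⟩
  · exact mem_span_pair.2 ⟨_, _, hz.symm⟩
  · exact mem_span_pair.2 ⟨_, _, hx.symm⟩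

section Minors

variable {ι : Type*}

def minor (a b : ι → ℤ) (i j : ι) : ℤ := a i * b j - a j * b i

lemma minor_self (a b : ι → ℤ) (i : ι) : minor a b i i = 0 := sub_self _

lemma minor_comm (a b : ι → ℤ) (i j : ι) : minor b a i j = -minor a b i j := by
  unfold minor; ring

lemma minor_eq_mul_of_smul_eq_add {a b c : ι → ℤ} {p y : ℤ} (h : p • c = a + y • b) (i j : ι) :
    minor a b i j = p * minor c b i j := by
  have hi := congrFun h i
  have hj := congrFun h j
  simp only [Pi.smul_apply, Pi.add_apply, smul_eq_mul] at hi hj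
  unfold minor
  linear_combination b i * hj - b j * hi

lemma span_intCast_pair_eq_of_smul_eq_add {a b c : ι → ℤ} {p y : ℤ} (hp : p ≠ 0)
    (h : p • c = a + y • b) :
    span ℚ ({fun i => (c i : ℚ), fun i => (b i : ℚ)} : Set (ι → ℚ)) =
      span ℚ {fun i => (a i : ℚ), fun i => (b i : ℚ)} := by
  refine span_pair_eq_of_smul_eq_add (p := (p : ℚ)) (t := (y : ℚ)) (by exact_mod_cast hp) ?_
  funext i
  simpa using congrArg (Int.cast : ℤ → ℚ) (congrFun h i)

lemma exists_dvd_add_mul_of_dvd_minor {a b : ι → ℤ} {p : ℕ} [Fact p.Prime] {k : ι}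
    (hk : ¬(p : ℤ) ∣ b k) (h : ∀ i, (p : ℤ) ∣ minor a b i k) :
    ∃ y : ℤ, ∀ i, (p : ℤ) ∣ a i + y * b i := by
  have hbk : (b k : ZMod p) ≠ 0 := by rwa [Ne, ZMod.intCast_zmod_eq_zero_iff_dvd]
  refine ⟨((-(a k : ZMod p) * (b k : ZMod p)⁻¹).val : ℕ), fun i => ?_⟩
  have hik := (ZMod.intCast_zmod_eq_zero_iff_dvd _ p).2 (h i)
  rw [← ZMod.intCast_zmod_eq_zero_iff_dvd]
  push_cast [minor, ZMod.natCast_zmod_val] at hik ⊢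
  field_simp
  linear_combination hik

variable [Fintype ι] [DecidableEq ι]

def minorGcd (a b : ι → ℤ) : ℤ :=
  (univ.filter fun p : ι × ι => p.1 ≠ p.2).gcd fun p => minor a b p.1 p.2

lemma minorGcd_nonneg (a b : ι → ℤ) : 0 ≤ minorGcd a b :=
  Int.nonneg_of_normalize_eq_self normalize_gcd

lemma minorGcd_dvd_minor (a b : ι → ℤ) (i j : ι) : minorGcd a b ∣ minor a b i j := by
  rcases eq_or_ne i j with rfl | hij
  · rw [minor_self]; exact dvd_zero _
  · exact gcd_dvd (f := fun p : ι × ι => minor a b p.1 p.2) (b := (i, j)) (by simpa using hij)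

lemma minorGcd_ne_zero {a b : ι → ℤ} {i j : ι} (h : minor a b i j ≠ 0) : minorGcd a b ≠ 0 :=
  fun h0 => h (eq_zero_of_zero_dvd (h0 ▸ minorGcd_dvd_minor a b i j))

lemma minorGcd_comm (a b : ι → ℤ) : minorGcd b a = minorGcd a b := by
  refine Int.dvd_antisymm (minorGcd_nonneg b a) (minorGcd_nonneg a b) ?_ ?_ <;>
    refine dvd_gcd_iff.2 fun q _ => ?_
  · simpa [minor_comm a b] using minorGcd_dvd_minor b a q.1 q.2
  · simpa [minor_comm b a] using minorGcd_dvd_minor a b q.1 q.2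

lemma minorGcd_eq_mul_of_smul_eq_add {a b c : ι → ℤ} {p : ℕ} {y : ℤ}
    (h : (p : ℤ) • c = a + y • b) : minorGcd a b = p * minorGcd c b := by
  rw [minorGcd, minorGcd, gcd_congr rfl fun q _ => minor_eq_mul_of_smul_eq_add h q.1 q.2,
    Finset.gcd_mul_left, Int.normalize_coe_nat]

lemma exists_minorGcd_eq_prime_mul {a b : ι → ℤ} {p : ℕ} (hp : p.Prime)
    (h : (p : ℤ) ∣ minorGcd a b) :
    ∃ c d : ι → ℤ, minorGcd a b = p * minorGcd c d ∧
      span ℚ ({fun i => (c i : ℚ), fun i => (d i : ℚ)} : Set (ι → ℚ)) =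
        span ℚ {fun i => (a i : ℚ), fun i => (b i : ℚ)} := by
  have hp0 : (p : ℤ) ≠ 0 := by exact_mod_cast hp.ne_zero
  by_cases hb : ∀ i, (p : ℤ) ∣ b i
  · choose d hd using hb
    have hsmul : (p : ℤ) • d = b + (0 : ℤ) • a := by
      funext i; simp [hd i]
    refine ⟨a, d, ?_, ?_⟩
    · rw [← minorGcd_comm, minorGcd_eq_mul_of_smul_eq_add hsmul, minorGcd_comm]
    · rw [Set.pair_comm, span_intCast_pair_eq_of_smul_eq_add hp0 hsmul, Set.pair_comm]
  · push Not at hb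
    obtain ⟨k, hk⟩ := hb
    have : Fact p.Prime := ⟨hp⟩
    obtain ⟨y, hy⟩ :=
      exists_dvd_add_mul_of_dvd_minor hk fun i => h.trans (minorGcd_dvd_minor a b i k)
    choose c hc using hy
    have hsmul : (p : ℤ) • c = a + y • b := by
      funext i; simp [hc i]
    exact ⟨c, b, minorGcd_eq_mul_of_smul_eq_add hsmul,
      span_intCast_pair_eq_of_smul_eq_add hp0 hsmul⟩

theorem exists_minorGcd_eq_one {a b : ι → ℤ} (h : minorGcd a b ≠ 0) :
    ∃ c d : ι → ℤ, minorGcd c d = 1 ∧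
      span ℚ ({fun i => (c i : ℚ), fun i => (d i : ℚ)} : Set (ι → ℚ)) =
        span ℚ {fun i => (a i : ℚ), fun i => (b i : ℚ)} := by
  induction hn : (minorGcd a b).natAbs using Nat.strong_induction_on generalizing a b with
  | _ n ih =>
  have hcast : (n : ℤ) = minorGcd a b := hn ▸ Int.natAbs_of_nonneg (minorGcd_nonneg a b)
  by_cases h1 : n = 1
  · exact ⟨a, b, by rw [← hcast, h1, Nat.cast_one], rfl⟩
  have hp := Nat.minFac_prime h1
  obtain ⟨c, d, hcd, hspan⟩ :=
    exists_minorGcd_eq_prime_mul hp (hcast ▸ Int.natCast_dvd_natCast.2 n.minFac_dvd)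
  have hcd0 : minorGcd c d ≠ 0 := right_ne_zero_of_mul (hcd ▸ h)
  have hlt : (minorGcd c d).natAbs < n := by
    rw [← hn, hcd, Int.natAbs_mul, Int.natAbs_natCast]
    exact lt_mul_left (Int.natAbs_pos.2 hcd0) hp.one_lt
  obtain ⟨c', d', h1', hspan'⟩ := ih _ hlt hcd0 rfl
  exact ⟨c', d', h1', hspan'.trans hspan⟩

end Minors

/-- Given integer quadruples `a, b` with `a_i b_j - a_j b_i ≠ 0` for some
`i, j`, there are integer quadruples `c, d` with `gcd_{i ≠ j}(c_i d_j - c_j d_i) = 1`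
spanning the same 2-dimensional `ℚ`-subspace of `ℚ⁴` as `a` and `b`. -/
theorem statement4 (a b : Fin 4 → ℤ)
    (h : ∃ i j : Fin 4, a i * b j - a j * b i ≠ 0) :
    ∃ c d : Fin 4 → ℤ,
      ((Finset.univ.filter fun p : Fin 4 × Fin 4 => p.1 ≠ p.2).gcd
          fun p => c p.1 * d p.2 - c p.2 * d p.1) = 1 ∧
      Submodule.span ℚ ({fun i => (c i : ℚ), fun i => (d i : ℚ)} : Set (Fin 4 → ℚ)) =
        Submodule.span ℚ ({fun i => (a i : ℚ), fun i => (b i : ℚ)} : Set (Fin 4 → ℚ)) := by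
  obtain ⟨i, j, hij⟩ := h
  exact exists_minorGcd_eq_one (minorGcd_ne_zero (a := a) (b := b) hij)
end

section
/- Let q(x₀,x₁,x₂,x₃) = a₀x₀² + a₁x₁² + a₂x₂² + a₃x₃² and r(x₀,x₁,x₂,x₃) = b₀x₀² + b₁x₁² + b₂x₂² + b₃x₃² be a primitive pair of diagonal quadratic forms with integer coefficients. Let x = (x₀,x₁,x₂,x₃) and y = (y₀,y₁,y₂,y₃) in ℤ⁴ satisfy q(x) = r(x) = 0 and q(y) = r(y) = 0. Then there exists a nonnegative integer λ such that |x_k² y_l² − x_l² y_k²| = λ·|a_i b_j − a_j b_i| for every choice of indices i, j, k, l with {i,j,k,l} = {0,1,2,3}. -/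
/-!
Put `u = x²` and `v = y²` coordinatewise. Both lie in the kernel of the `2 × 4` matrix with rows
`a` and `b`, so the Plücker coordinates `p_{kl} = u_k v_l - u_l v_k` of `span(u, v)` are, up to sign,
proportional to the complementary minors `d_{ij} = a_i b_j - a_j b_i`: for any two orderings
`(i,j,k,l)`, `(i',j',k',l')` of `{0,1,2,3}`, `|d_{ij} p_{k'l'}| = |d_{i'j'} p_{kl}|`, each instance
being a linear combination of `q(x) = r(x) = q(y) = r(y) = 0`. As the `d_{ij}` are coprime, the
proportionality factor is an integer: the gcd of the `p_{kl}`.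
-/

open scoped BigOperators

/-- `d_{ij} = a_i b_j - a_j b_i`. -/
def dd (a b : Fin 4 → ℤ) (i j : Fin 4) : ℤ := a i * b j - a j * b i

/-- A pair of diagonal quadratic forms with integer coefficient vectors `a`, `b` is
primitive if the gcd of the `a_i b_j - a_j b_i` over all pairs `i ≠ j` is `1`. -/
def PrimPair (a b : Fin 4 → ℤ) : Prop :=
  ((Finset.univ.filter fun p : Fin 4 × Fin 4 => p.1 ≠ p.2).gcd
    fun p => dd a b p.1 p.2) = 1

open Finset

theorem Finset.gcd_congr_associated {ι α : Type*} [CommMonoidWithZero α] [NormalizedGCDMonoid α]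
    {s : Finset ι} {f g : ι → α} (h : ∀ p ∈ s, Associated (f p) (g p)) :
    s.gcd f = s.gcd g :=
  dvd_antisymm_of_normalize_eq normalize_gcd normalize_gcd
    (dvd_gcd fun p hp => (gcd_dvd hp).trans (h p hp).dvd)
    (dvd_gcd fun p hp => (gcd_dvd hp).trans (h p hp).symm.dvd)

theorem Finset.associated_mul_gcd_of_gcd_eq_one {ι α : Type*} [CommMonoidWithZero α]
    [NormalizedGCDMonoid α] {s : Finset ι} {A B : ι → α} (hA : s.gcd A = 1)
    (h : ∀ p ∈ s, ∀ q ∈ s, Associated (A p * B q) (A q * B p)) {q : ι} (hq : q ∈ s) :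
    Associated (B q) (A q * s.gcd B) := by
  have hcross : (s.gcd fun p => B q * A p) = s.gcd fun p => A q * B p :=
    gcd_congr_associated fun p hp => by rw [mul_comm]; exact h p hp q hq
  have hB := gcd_mul_left' s A (B q)
  rw [hA, mul_one, hcross] at hB
  exact hB.symm.trans (gcd_mul_left' s B (A q))

theorem pairwise_ne_of_eq_univ {i j k l : Fin 4} (h : ({i, j, k, l} : Finset (Fin 4)) = univ) :
    i ≠ j ∧ i ≠ k ∧ i ≠ l ∧ j ≠ k ∧ j ≠ l ∧ k ≠ l := by
  revert i j k l; decide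

theorem sum_fin_four_of_eq_univ {M : Type*} [AddCommMonoid M] {i j k l : Fin 4}
    (h : ({i, j, k, l} : Finset (Fin 4)) = univ) (f : Fin 4 → M) :
    ∑ m, f m = f i + f j + f k + f l := by
  obtain ⟨hij, hik, hil, hjk, hjl, hkl⟩ := pairwise_ne_of_eq_univ h
  rw [← h, sum_insert (by simp [hij, hik, hil]), sum_insert (by simp [hjk, hjl]),
    sum_pair hkl, add_assoc, add_assoc]

theorem natAbs_dd_comm (a b : Fin 4 → ℤ) (i j : Fin 4) :
    (dd a b j i).natAbs = (dd a b i j).natAbs := by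
  rw [← Int.natAbs_neg]; unfold dd; ring_nf

section Kernel

variable {a b u v : Fin 4 → ℤ} {i j k l : Fin 4}
  (hau : ∑ m, a m * u m = 0) (hbu : ∑ m, b m * u m = 0)
  (hav : ∑ m, a m * v m = 0) (hbv : ∑ m, b m * v m = 0)
include hau hbu hav hbv

/- `m ↦ d_{mi}` is `b_i a - a_i b`, so it annihilates `u` and `v`; on the coordinates other than `i`
it is therefore parallel to the cross product of `u` and `v`. -/
theorem dd_mul_dd_of_common (h : ({i, j, k, l} : Finset (Fin 4)) = univ) :
    dd a b i j * dd u v j l = dd a b k i * dd u v k l := by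
  rw [sum_fin_four_of_eq_univ h] at hau hbu hav hbv
  unfold dd
  linear_combination (-b i * v l) * hau + (a i * v l) * hbu + (b i * u l) * hav - (a i * u l) * hbv

theorem dd_mul_dd_of_complementary (h : ({i, j, k, l} : Finset (Fin 4)) = univ) :
    dd a b i j * dd u v i j = dd a b k l * dd u v k l := by
  rw [sum_fin_four_of_eq_univ h] at hau hbu hav hbv
  unfold dd
  linear_combination (-b k * v k - b l * v l) * hau + (a k * v k + a l * v l) * hbu
    + (-b i * u i - b j * u j) * hav + (a i * u i + a j * u j) * hbv

theorem natAbs_dd_mul_dd_eq {i' j' k' l' : Fin 4} (h : ({i, j, k, l} : Finset (Fin 4)) = univ)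
    (h' : ({i', j', k', l'} : Finset (Fin 4)) = univ) :
    (dd a b i j * dd u v k' l').natAbs = (dd a b i' j' * dd u v k l).natAbs := by
  have hijlk : ({i, j, l, k} : Finset (Fin 4)) = univ := by rw [pair_comm, h]
  have hjikl : ({j, i, k, l} : Finset (Fin 4)) = univ := by rw [insert_comm, h]
  have hjilk : ({j, i, l, k} : Finset (Fin 4)) = univ := by rw [insert_comm, pair_comm, h]
  have h₁ := congrArg Int.natAbs (dd_mul_dd_of_common hau hbu hav hbv h)
  have h₂ := congrArg Int.natAbs (dd_mul_dd_of_common hau hbu hav hbv hijlk)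
  have h₃ := congrArg Int.natAbs (dd_mul_dd_of_common hau hbu hav hbv hjikl)
  have h₄ := congrArg Int.natAbs (dd_mul_dd_of_common hau hbu hav hbv hjilk)
  have h₅ := congrArg Int.natAbs (dd_mul_dd_of_complementary hau hbu hav hbv h)
  obtain ⟨hij', hik', hil', hjk', hjl', hkl'⟩ := pairwise_ne_of_eq_univ h'
  have mem : ∀ m, m = i ∨ m = j ∨ m = k ∨ m = l := fun m => by simpa [← h] using mem_univ m
  clear hau hbu hav hbv hijlk hjikl hjilk
  simp only [Int.natAbs_mul] at *
  -- `(i', j', k', l')` is one of the 24 orderings of `(i, j, k, l)`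
  rcases mem i' with rfl | rfl | rfl | rfl <;> rcases mem j' with rfl | rfl | rfl | rfl <;>
    try contradiction
  all_goals rcases mem k' with rfl | rfl | rfl | rfl <;> try contradiction
  all_goals rcases mem l' with rfl | rfl | rfl | rfl <;> try contradiction
  all_goals simp only [natAbs_dd_comm a b, natAbs_dd_comm u v] at * <;> linarith

end Kernel

def orderings : Finset (Fin 4 × Fin 4 × Fin 4 × Fin 4) :=
  univ.filter fun t => {t.1, t.2.1, t.2.2.1, t.2.2.2} = univ

theorem image_orderings :
    orderings.image (fun t => (t.1, t.2.1)) = univ.filter fun p : Fin 4 × Fin 4 => p.1 ≠ p.2 := by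
  decide

theorem gcd_orderings_dd_eq_one {a b : Fin 4 → ℤ} (hprim : PrimPair a b) :
    orderings.gcd (fun t => dd a b t.1 t.2.1) = 1 := by
  rw [← hprim, ← image_orderings, gcd_image]
  rfl

/-- For a primitive pair of diagonal quadratic forms `q, r` and common
integral zeros `x, y`, there is a nonnegative integer `λ` with
`|x_k² y_l² - x_l² y_k²| = λ |a_i b_j - a_j b_i|` whenever `{i,j,k,l} = {0,1,2,3}`. -/
theorem statement5 (a b x y : Fin 4 → ℤ) (hprim : PrimPair a b)
    (hxq : ∑ i, a i * x i ^ 2 = 0) (hxr : ∑ i, b i * x i ^ 2 = 0)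
    (hyq : ∑ i, a i * y i ^ 2 = 0) (hyr : ∑ i, b i * y i ^ 2 = 0) :
    ∃ lam : ℕ, ∀ i j k l : Fin 4, ({i, j, k, l} : Finset (Fin 4)) = Finset.univ →
      |x k ^ 2 * y l ^ 2 - x l ^ 2 * y k ^ 2| = (lam : ℤ) * |a i * b j - a j * b i| := by
  set u : Fin 4 → ℤ := fun m => x m ^ 2
  set v : Fin 4 → ℤ := fun m => y m ^ 2
  set p : Fin 4 × Fin 4 × Fin 4 × Fin 4 → ℤ := fun t => dd u v t.2.2.1 t.2.2.2
  have hrel : ∀ s ∈ orderings, ∀ t ∈ orderings,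
      Associated (dd a b s.1 s.2.1 * p t) (dd a b t.1 t.2.1 * p s) := by
    intro s hs t ht
    simp only [orderings, mem_filter, mem_univ, true_and] at hs ht
    exact Int.associated_iff_natAbs.mpr (natAbs_dd_mul_dd_eq hxq hxr hyq hyr hs ht)
  refine ⟨(orderings.gcd p).natAbs, fun i j k l h => ?_⟩
  have hp := associated_mul_gcd_of_gcd_eq_one (gcd_orderings_dd_eq_one hprim) hrel
    (q := (i, j, k, l)) (by simp [orderings, h])
  change |dd u v k l| = _ * |dd a b i j|
  rw [← Int.natCast_natAbs, Int.associated_iff_natAbs.mp hp, Int.natAbs_mul, Nat.cast_mul,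
    Int.natCast_natAbs, mul_comm]
end

section
/- Let q(x₀,x₁,x₂,x₃) = a₀x₀² + a₁x₁² + a₂x₂² + a₃x₃² and r(x₀,x₁,x₂,x₃) = b₀x₀² + b₁x₁² + b₂x₂² + b₃x₃² be a primitive pair of diagonal quadratic forms with integer coefficients such that d_ij = a_i b_j − a_j b_i ≠ 0 for all 0 ≤ i < j ≤ 3, and let p be an odd prime not dividing ∏_{0≤i<j≤3} d_ij. Let s ≥ 1 and let F₁, ..., F_s be monomials in x₀,x₁,x₂,x₃, all of the same degree d ≥ 1. Let x⁽¹⁾, ..., x⁽ˢ⁾ ∈ ℤ⁴ be quadruples of coprime integers with q(x⁽ⁱ⁾) = r(x⁽ⁱ⁾) = 0 for all i, whose reductions modulo p all define the same point of ℙ³(F_p). Then p^{s(s−1)/2} divides the integer det((F_j(x⁽ⁱ⁾))_{1≤i,j≤s}). -/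
open scoped BigOperators

/-!
If two coordinates of a point of the curve were divisible by `p`, the relations
`∑ₜ d_{tk} xₜ² = b_k q - a_k r = 0` would force all four to be, so every point has three
coordinates prime to `p`; permute so that only coordinate `0` may be divisible by `p` and scale
each point so that coordinate `1` is `≡ 1 (mod p^N)`, `N = s(s-1)/2`. The curve equations then
read `d_{23} x₂² ≡ -(d_{03} x₀² + d_{13})` and symmetrically for `x₃`, and Newton's iteration for
these square roots (whose derivatives are units mod `p`) turns every coordinate into a polynomial
in `x₀` modulo `p^N`. So modulo `p^N` the matrix becomes `(Q_j(tᵢ))` with all `tᵢ` congruent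
mod `p`. Expanding the `Q_j` around the common residue writes its determinant as a sum of terms
divisible by `p^(k₁ + ⋯ + k_s)` with distinct exponents `kᵢ`, hence by `p^N`.
-/

open Finset Polynomial

theorem Finset.sum_range_card_le_sum (T : Finset ℕ) : ∑ i ∈ range #T, i ≤ ∑ x ∈ T, x := by
  induction T using Finset.induction_on_max with
  | empty => simp
  | insert a T hlt ih =>
    have ha : a ∉ T := fun h => (hlt a h).false
    have hcard : #T ≤ a := by
      simpa using card_le_card (fun x hx => mem_range.2 (hlt x hx) : T ⊆ range a)
    rw [card_insert_of_notMem ha, sum_range_succ, sum_insert ha]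
    omega

theorem Function.Injective.sum_range_le_sum {s : ℕ} {r : Fin s → ℕ} (hr : r.Injective) :
    ∑ i ∈ range s, i ≤ ∑ i, r i := by
  have hcard : #(univ.image r) = s := by simp [card_image_of_injective _ hr]
  simpa [hcard, sum_image fun _ _ _ _ h => hr h] using (univ.image r).sum_range_card_le_sum

theorem pow_dvd_det_eval_of_dvd_sub {R : Type*} [CommRing R] {s : ℕ} (π τ : R)
    (Q : Fin s → R[X]) (t : Fin s → R) (ht : ∀ i, π ∣ t i - τ) :
    π ^ (s * (s - 1) / 2) ∣ (Matrix.of fun i j => (Q j).eval (t i)).det := by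
  choose e he using ht
  let T : Fin s → R[X] := fun j => (Q j).comp (X + C τ)
  let K := (univ.sup fun j => (T j).natDegree) + 1
  have hrow : (Matrix.of fun i j => (Q j).eval (t i)) =
      fun i => ∑ k ∈ range K, fun j => (T j).coeff k * (π * e i) ^ k := by
    ext i j
    have hdeg : (T j).natDegree < K :=
      Nat.lt_succ_of_le (le_sup (f := fun j => (T j).natDegree) (mem_univ j))
    simp only [Matrix.of_apply, Finset.sum_apply, ← he i, T, eval_comp, ← eval_eq_sum_range' hdeg]
    simp
  rw [Matrix.det, hrow, ← AlternatingMap.coe_multilinearMap, MultilinearMap.map_sum_finset]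
  refine dvd_sum fun r _ => ?_
  change π ^ _ ∣ (Matrix.of fun i j => (T j).coeff (r i) * (π * e i) ^ r i).det
  have hfac : (Matrix.of fun i j => (T j).coeff (r i) * (π * e i) ^ r i).det =
      (∏ i, (π * e i) ^ r i) * (Matrix.of fun i j => (T j).coeff (r i)).det := by
    rw [← Matrix.det_mul_column]
    congr 1
    ext i j
    simp [mul_comm]
  rw [hfac]
  by_cases hr : r.Injective
  · refine Dvd.dvd.mul_right ?_ _
    rw [prod_congr rfl fun i _ => mul_pow π (e i) (r i), prod_mul_distrib, prod_pow_eq_pow_sum]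
    exact (pow_dvd_pow π (sum_range_id s ▸ hr.sum_range_le_sum)).mul_right _
  · obtain ⟨i, i', hii', hne⟩ := Function.not_injective_iff.mp hr
    rw [Matrix.det_zero_of_row_eq hne (by ext j; simp [hii']), mul_zero]
    exact dvd_zero _

theorem pow_succ_dvd_sub_newton_step {R : Type*} [CommRing R] {π α c z z₀ w v : R} {k : ℕ}
    (hk : k ≠ 0) (hc : π ∣ 1 - c * (2 * α * z₀)) (hz : π ∣ z - z₀) (hw : π ^ k ∣ z - w)
    (hv : π ^ (k + 1) ∣ α * z ^ 2 + v) :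
    π ^ (k + 1) ∣ z - (w - c * (α * w ^ 2 + v)) := by
  have hlin : π ∣ 1 - c * α * (w + z) := by
    have hπw : π ∣ z - w := (dvd_pow_self π hk).trans hw
    have : 1 - c * α * (w + z) = 1 - c * (2 * α * z₀) + c * α * (z - w) - 2 * c * α * (z - z₀) := by
      ring
    rw [this]
    exact (hc.add (hπw.mul_left _)).sub (hz.mul_left _)
  have : z - (w - c * (α * w ^ 2 + v)) = (z - w) * (1 - c * α * (w + z)) + c * (α * z ^ 2 + v) := by
    ring
  rw [this]
  exact (pow_succ π k ▸ mul_dvd_mul hw hlin).add (hv.mul_left c)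

theorem exists_polynomial_dvd_sub_eval_of_dvd_sq {R ι : Type*} [CommRing R] (π α z₀ : R)
    (g : R[X]) (t z : ι → R) (N : ℕ) (hunit : IsCoprime π (2 * α * z₀))
    (hz : ∀ i, π ∣ z i - z₀) (heq : ∀ i, π ^ N ∣ α * z i ^ 2 + g.eval (t i)) :
    ∃ Z : R[X], ∀ i, π ^ N ∣ z i - Z.eval (t i) := by
  obtain ⟨a, c, hac⟩ := hunit
  have hc : π ∣ 1 - c * (2 * α * z₀) := ⟨a, by linear_combination -hac⟩
  rcases Nat.eq_zero_or_pos N with rfl | hN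
  · exact ⟨0, fun i => by simp⟩
  induction N, hN using Nat.le_induction with
  | base => exact ⟨C z₀, fun i => by simpa using hz i⟩
  | succ k hk ih =>
    obtain ⟨Z, hZ⟩ := ih fun i => (pow_dvd_pow π k.le_succ).trans (heq i)
    refine ⟨Z - C c * (C α * Z ^ 2 + g), fun i => ?_⟩
    simpa using pow_succ_dvd_sub_newton_step (by omega) hc (hz i) (hZ i) (heq i)

theorem pow_dvd_det_monomials_of_dvd_sub_eval {R ι : Type*} [CommRing R] {s : ℕ} (π τ : R)
    (t : Fin s → R) (ht : ∀ i, π ∣ t i - τ) (P : ι → R[X]) (y : Fin s → ι → R)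
    (hy : ∀ i w, π ^ (s * (s - 1) / 2) ∣ y i w - (P w).eval (t i)) (d : Fin s → ι →₀ ℕ) :
    π ^ (s * (s - 1) / 2) ∣ (Matrix.of fun i j => (d j).prod fun w e => y i w ^ e).det := by
  let f := Ideal.Quotient.mk (Ideal.span {π ^ (s * (s - 1) / 2)})
  have hf : ∀ a b, f a = f b ↔ π ^ (s * (s - 1) / 2) ∣ a - b := fun a b => by
    rw [Ideal.Quotient.eq, Ideal.mem_span_singleton]
  let Q : Fin s → R[X] := fun j => (d j).prod fun w e => P w ^ e
  have hcongr : f (Matrix.of fun i j => (d j).prod fun w e => y i w ^ e).det =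
      f (Matrix.of fun i j => (Q j).eval (t i)).det := by
    rw [RingHom.map_det, RingHom.map_det]
    congr 1
    ext i j
    simp only [RingHom.mapMatrix_apply, Matrix.map_apply, Matrix.of_apply, Q, ← coe_evalRingHom,
      map_finsuppProd, map_pow, (hf _ _).2 (hy i _)]
  simpa using ((hf _ _).1 hcongr).add (pow_dvd_det_eval_of_dvd_sub π τ Q t ht)

theorem dd_swap (a b : Fin 4 → ℤ) (i j : Fin 4) : dd a b j i = -dd a b i j := by
  simp only [dd]; ring

theorem not_dvd_dd_of_not_dvd_prod {a b : Fin 4 → ℤ} {p : ℤ}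
    (hgood : ¬ p ∣ ∏ pr ∈ univ.filter fun pr : Fin 4 × Fin 4 => pr.1 < pr.2, dd a b pr.1 pr.2)
    {i j : Fin 4} (hij : i ≠ j) : ¬ p ∣ dd a b i j := by
  intro h
  rcases hij.lt_or_gt with hlt | hgt
  · exact hgood (h.trans (dvd_prod_of_mem _ (mem_filter.2 ⟨mem_univ (i, j), hlt⟩)))
  · exact hgood ((dd_swap a b i j ▸ dvd_neg.2 h).trans
      (dvd_prod_of_mem _ (mem_filter.2 ⟨mem_univ (j, i), hgt⟩)))

theorem sum_dd_mul_sq_eq_zero {a b x : Fin 4 → ℤ} (hq : ∑ t, a t * x t ^ 2 = 0)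
    (hr : ∑ t, b t * x t ^ 2 = 0) (k : Fin 4) : ∑ t, dd a b t k * x t ^ 2 = 0 := by
  have : ∑ t, dd a b t k * x t ^ 2 = b k * ∑ t, a t * x t ^ 2 - a k * ∑ t, b t * x t ^ 2 := by
    simp only [mul_sum, ← sum_sub_distrib, dd]
    exact sum_congr rfl fun t _ => by ring
  rw [this, hq, hr, mul_zero, mul_zero, sub_zero]

theorem Fin.exists_ne_forall_eq_or_eq_or_eq_or_eq {w w₁ w₂ : Fin 4} (h₁ : w ≠ w₁)
    (h₂ : w ≠ w₂) (h₁₂ : w₁ ≠ w₂) : ∃ k, k ≠ w ∧ ∀ t, t = w ∨ t = w₁ ∨ t = w₂ ∨ t = k := by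
  revert w w₁ w₂; decide

theorem exists_forall_ne_not_dvd {a b x : Fin 4 → ℤ} {p : ℤ} (hp : Prime p)
    (hdd : ∀ i j, i ≠ j → ¬ p ∣ dd a b i j) (hgcd : univ.gcd x = 1)
    (hq : ∑ t, a t * x t ^ 2 = 0) (hr : ∑ t, b t * x t ^ 2 = 0) :
    ∃ c, ∀ w ≠ c, ¬ p ∣ x w := by
  have hpair : ∀ w₁ w₂, w₁ ≠ w₂ → p ∣ x w₁ → ¬ p ∣ x w₂ := by
    intro w₁ w₂ hne h₁ h₂
    refine hp.not_dvd_one (hgcd ▸ dvd_gcd fun w _ => ?_)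
    by_cases hw : w = w₁ ∨ w = w₂
    · rcases hw with rfl | rfl <;> assumption
    obtain ⟨hw₁, hw₂⟩ := not_or.1 hw
    obtain ⟨k, hkw, hk⟩ := Fin.exists_ne_forall_eq_or_eq_or_eq_or_eq hw₁ hw₂ hne
    -- in `∑ₜ dd t k xₜ² = 0` every term other than the `w`-th is divisible by `p`
    have hterm : p ∣ dd a b w k * x w ^ 2 := by
      have hsum := add_sum_erase univ (fun t => dd a b t k * x t ^ 2) (mem_univ w)
      rw [sum_dd_mul_sq_eq_zero hq hr k] at hsum
      rw [eq_neg_of_add_eq_zero_left hsum]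
      refine dvd_neg.2 (dvd_sum fun t ht => ?_)
      rcases hk t with rfl | rfl | rfl | rfl
      · simp at ht
      · exact (dvd_pow h₁ two_ne_zero).mul_left _
      · exact (dvd_pow h₂ two_ne_zero).mul_left _
      · simp [dd]
    exact hp.dvd_of_dvd_pow ((hp.dvd_or_dvd hterm).resolve_left (hdd w k hkw.symm))
  by_cases h : ∃ c, p ∣ x c
  · obtain ⟨c, hc⟩ := h
    exact ⟨c, fun w hw => hpair c w hw.symm hc⟩
  · exact ⟨0, fun w _ => not_exists.1 h w⟩

theorem exists_polynomial_dvd_sub_eval_of_quadrics {s N : ℕ} {a b : Fin 4 → ℤ} {p : ℤ} (hp : Prime p)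
    (hp2 : ¬ p ∣ 2) (hdd : ¬ p ∣ dd a b 2 3) (z : Fin s → Fin 4 → ℤ) (z₀ : Fin 4 → ℤ)
    (hq : ∀ i, ∑ t, a t * z i t ^ 2 = 0) (hr : ∀ i, ∑ t, b t * z i t ^ 2 = 0)
    (h1 : ∀ i, p ^ N ∣ z i 1 - 1) (hz : ∀ i k, p ∣ z i k - z₀ k)
    (h2 : ¬ p ∣ z₀ 2) (h3 : ¬ p ∣ z₀ 3) :
    ∃ P : Fin 4 → ℤ[X], ∀ i k, p ^ N ∣ z i k - (P k).eval (z i 0) := by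
  have hsq : ∀ i, p ^ N ∣ z i 1 ^ 2 - 1 := fun i => by
    rw [show z i 1 ^ 2 - 1 = (z i 1 - 1) * (z i 1 + 1) by ring]
    exact (h1 i).mul_right _
  -- eliminating coordinate `l` expresses `z_k²`, for `{k, l} = {2, 3}`, through `z₀²` and `z₁² ≡ 1`
  have hsolve : ∀ k l : Fin 4, k = 2 ∧ l = 3 ∨ k = 3 ∧ l = 2 → ¬ p ∣ z₀ k →
      ∃ Z : ℤ[X], ∀ i, p ^ N ∣ z i k - Z.eval (z i 0) := by
    intro k l hkl hk
    have hkl' : ¬ p ∣ dd a b k l := by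
      rcases hkl with ⟨rfl, rfl⟩ | ⟨rfl, rfl⟩
      · exact hdd
      · rwa [dd_swap, dvd_neg]
    refine exists_polynomial_dvd_sub_eval_of_dvd_sq p (dd a b k l) (z₀ k)
      (C (dd a b 0 l) * X ^ 2 + C (dd a b 1 l)) (fun i => z i 0) (fun i => z i k) N
      (hp.coprime_iff_not_dvd.2 (hp.not_dvd_mul (hp.not_dvd_mul hp2 hkl') hk))
      (fun i => hz i k) fun i => ?_
    have hsum := sum_dd_mul_sq_eq_zero (hq i) (hr i) l
    rw [Fin.sum_univ_four] at hsum
    have : dd a b k l * z i k ^ 2 + (C (dd a b 0 l) * X ^ 2 + C (dd a b 1 l)).eval (z i 0) =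
        -(dd a b 1 l * (z i 1 ^ 2 - 1)) := by
      simp only [eval_add, eval_mul, eval_C, eval_pow, eval_X]
      rcases hkl with ⟨rfl, rfl⟩ | ⟨rfl, rfl⟩ <;> simp only [dd] at hsum ⊢ <;>
        linear_combination hsum
    rw [this]
    exact dvd_neg.2 ((hsq i).mul_left _)
  obtain ⟨U, hU⟩ := hsolve 2 3 (by decide) h2
  obtain ⟨V, hV⟩ := hsolve 3 2 (by decide) h3
  refine ⟨![X, 1, U, V], fun i k => ?_⟩
  fin_cases k
  · simp
  · simpa using h1 i
  · exact hU i
  · exact hV i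

theorem exists_normalizing_scalars {ι : Type*} {s p N : ℕ} (hp : p.Prime) (hN : N ≠ 0)
    (x : Fin s → ι → ℤ)
    (hred : ∀ i i' : Fin s, ∃ u : (ZMod p)ˣ, ∀ t, (x i' t : ZMod p) = u * (x i t : ZMod p))
    (i₀ : Fin s) (m : ι) (hm : ¬ (p : ℤ) ∣ x i₀ m) :
    ∃ ℓ : Fin s → ℤ, (∀ i, ¬ (p : ℤ) ∣ ℓ i) ∧ (∀ i, (p : ℤ) ^ N ∣ ℓ i * x i m - 1) ∧
      ∀ i t, (p : ℤ) ∣ ℓ i * x i t - ℓ i₀ * x i₀ t := by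
  have hpZ : Prime (p : ℤ) := Nat.prime_iff_prime_int.mp hp
  have hcast (n : ℤ) : (n : ZMod p) = 0 ↔ (p : ℤ) ∣ n := ZMod.intCast_zmod_eq_zero_iff_dvd n p
  have hunit : ∀ i, IsCoprime ((p : ℤ) ^ N) (x i m) := fun i => by
    refine (hpZ.coprime_iff_not_dvd.2 ?_).pow_left
    obtain ⟨u, hu⟩ := hred i₀ i
    rwa [← hcast, hu m, u.mul_right_eq_zero, hcast]
  choose c ℓ hℓ using hunit
  have hℓN : ∀ i, (p : ℤ) ^ N ∣ ℓ i * x i m - 1 := fun i => ⟨-c i, by linear_combination hℓ i⟩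
  have hℓp : ∀ i, (p : ℤ) ∣ ℓ i * x i m - 1 := fun i => (dvd_pow_self _ hN).trans (hℓN i)
  refine ⟨ℓ, fun i h => hpZ.not_dvd_one ?_, hℓN, fun i t => ?_⟩
  · simpa using (h.mul_right (x i m)).sub (hℓp i)
  · obtain ⟨u, hu⟩ := hred i₀ i
    have e : (ℓ i : ZMod p) * (u * x i₀ m) = 1 := by
      rw [← hu m]; simpa [sub_eq_zero] using (hcast _).2 (hℓp i)
    have e₀ : (ℓ i₀ : ZMod p) * x i₀ m = 1 := by
      simpa [sub_eq_zero] using (hcast _).2 (hℓp i₀)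
    rw [← hcast]
    push_cast
    rw [hu t]
    linear_combination (x i₀ t : ZMod p) * ((ℓ i₀ : ZMod p) * e - (ℓ i : ZMod p) * u * e₀)

theorem sum_comp_mul_mul_sq_eq_zero {R ι : Type*} [CommRing R] [Fintype ι] {e x : ι → R}
    (h : ∑ t, e t * x t ^ 2 = 0) (σ : Equiv.Perm ι) (ℓ : R) :
    ∑ t, e (σ t) * (ℓ * x (σ t)) ^ 2 = 0 := by
  rw [Equiv.sum_comp σ fun t => e t * (ℓ * x t) ^ 2]
  simp only [mul_pow, mul_left_comm (e _), ← mul_sum, h, mul_zero]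

theorem det_monomials_mul_rows {R ι : Type*} [CommRing R] {s D : ℕ} (d : Fin s → ι →₀ ℕ)
    (hdeg : ∀ j, (d j).sum (fun _ e => e) = D) (ℓ : Fin s → R) (x : Fin s → ι → R) :
    (Matrix.of fun i j => (d j).prod fun w e => (ℓ i * x i w) ^ e).det =
      (∏ i, ℓ i ^ D) * (Matrix.of fun i j => (d j).prod fun w e => x i w ^ e).det := by
  rw [← Matrix.det_mul_column]
  congr 1
  ext i j
  simp only [Matrix.of_apply, Finsupp.prod, mul_pow, prod_mul_distrib, prod_pow_eq_pow_sum,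
    ← hdeg j, Finsupp.sum]

theorem statement8_general (a b : Fin 4 → ℤ)
    (p : ℕ) (hp : p.Prime) (hodd : p ≠ 2)
    (hgood : ¬ (p : ℤ) ∣
      ∏ pr ∈ Finset.univ.filter fun pr : Fin 4 × Fin 4 => pr.1 < pr.2, dd a b pr.1 pr.2)
    (s : ℕ) (D : ℕ)
    (d : Fin s → (Fin 4 →₀ ℕ)) (hdeg : ∀ j, (d j).sum (fun _ e => e) = D)
    (x : Fin s → (Fin 4 → ℤ))
    (hgcd : ∀ i, Finset.univ.gcd (x i) = 1)
    (hxq : ∀ i, ∑ t, a t * x i t ^ 2 = 0)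
    (hxr : ∀ i, ∑ t, b t * x i t ^ 2 = 0)
    (hred : ∀ i i' : Fin s, ∃ u : (ZMod p)ˣ,
      ∀ t, ((x i' t : ZMod p)) = (u : ZMod p) * (x i t : ZMod p)) :
    (p : ℤ) ^ (s * (s - 1) / 2) ∣
      Matrix.det (Matrix.of fun i j => (d j).prod fun t e => x i t ^ e) := by
  obtain hN | hN := eq_or_ne (s * (s - 1) / 2) 0
  · simp [hN]
  have hpZ : Prime (p : ℤ) := Nat.prime_iff_prime_int.mp hp
  have hp2 : ¬ (p : ℤ) ∣ 2 := fun h =>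
    hodd ((Nat.prime_dvd_prime_iff_eq hp Nat.prime_two).1 (by exact_mod_cast h))
  let i₀ : Fin s := ⟨0, Nat.pos_of_ne_zero fun hs => hN (by simp [hs])⟩
  obtain ⟨c, hc⟩ := exists_forall_ne_not_dvd hpZ (fun _ _ => not_dvd_dd_of_not_dvd_prod hgood)
    (hgcd i₀) (hxq i₀) (hxr i₀)
  let σ := Equiv.swap 0 c
  have hσ : ∀ k ≠ 0, ¬ (p : ℤ) ∣ x i₀ (σ k) := fun k hk =>
    hc _ (Equiv.swap_apply_left 0 c ▸ σ.injective.ne hk)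
  obtain ⟨ℓ, hℓp, hℓ1, hℓ⟩ :=
    exists_normalizing_scalars hp hN x hred i₀ (σ 1) (hσ 1 one_ne_zero)
  obtain ⟨P, hP⟩ := exists_polynomial_dvd_sub_eval_of_quadrics (a := a ∘ σ) (b := b ∘ σ) hpZ hp2
    (not_dvd_dd_of_not_dvd_prod hgood (σ.injective.ne (by decide)))
    (fun i k => ℓ i * x i (σ k)) (fun k => ℓ i₀ * x i₀ (σ k))
    (fun i => sum_comp_mul_mul_sq_eq_zero (hxq i) σ (ℓ i))
    (fun i => sum_comp_mul_mul_sq_eq_zero (hxr i) σ (ℓ i)) hℓ1 (fun i k => hℓ i (σ k))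
    (hpZ.not_dvd_mul (hℓp i₀) (hσ 2 (by decide))) (hpZ.not_dvd_mul (hℓp i₀) (hσ 3 (by decide)))
  have hdet := pow_dvd_det_monomials_of_dvd_sub_eval (p : ℤ) (ℓ i₀ * x i₀ c)
    (fun i => ℓ i * x i c) (fun i => hℓ i c) (fun w => P (σ.symm w)) (fun i w => ℓ i * x i w)
    (fun i w => by simpa [σ] using hP i (σ.symm w)) d
  rw [det_monomials_mul_rows d hdeg] at hdet
  exact (IsCoprime.prod_right fun i _ =>
    (hpZ.coprime_iff_not_dvd.2 (hℓp i)).pow_left.pow_right).dvd_of_dvd_mul_left hdet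

/-- Let `q, r` be a primitive pair of diagonal quadratic forms with all
`d_ij ≠ 0`, and `p` an odd prime of good reduction. If `F₁, …, F_s` are monomials of a common
degree `D ≥ 1` and `x⁽¹⁾, …, x⁽ˢ⁾` are coprime integral zeros of `q` and `r` whose reductions
mod `p` define the same point of `ℙ³(𝔽_p)`, then `p^{s(s-1)/2} ∣ det(F_j(x⁽ⁱ⁾))`. -/
theorem statement8 (a b : Fin 4 → ℤ) (hprim : PrimPair a b)
    (hnd : ∀ i j : Fin 4, i < j → dd a b i j ≠ 0)
    (p : ℕ) (hp : p.Prime) (hodd : p ≠ 2)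
    (hgood : ¬ (p : ℤ) ∣
      ∏ pr ∈ Finset.univ.filter fun pr : Fin 4 × Fin 4 => pr.1 < pr.2, dd a b pr.1 pr.2)
    (s : ℕ) (hs : 1 ≤ s) (D : ℕ) (hD : 1 ≤ D)
    (d : Fin s → (Fin 4 →₀ ℕ)) (hdeg : ∀ j, (d j).sum (fun _ e => e) = D)
    (x : Fin s → (Fin 4 → ℤ))
    (hgcd : ∀ i, Finset.univ.gcd (x i) = 1)
    (hxq : ∀ i, ∑ t, a t * x i t ^ 2 = 0)
    (hxr : ∀ i, ∑ t, b t * x i t ^ 2 = 0)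
    (hred : ∀ i i' : Fin s, ∃ u : (ZMod p)ˣ,
      ∀ t, ((x i' t : ZMod p)) = (u : ZMod p) * (x i t : ZMod p)) :
    (p : ℤ) ^ (s * (s - 1) / 2) ∣
      Matrix.det (Matrix.of fun i j => (d j).prod fun t e => x i t ^ e) :=
  statement8_general a b p hp hodd hgood s D d hdeg x hgcd hxq hxr hred
end
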